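/- Let f₆ = 2X₁X₂X₅X₆Y₂(X₂Y₁+X₃(Y₁+Y₂))Y₃²Y₄(X₅Y₅+X₄(Y₄+Y₅)) / ((X₂Y₂+X₁(Y₁+Y₂))(X₃Y₃+X₂(Y₂+Y₃))²(X₄Y₃+X₅(Y₃+Y₄))²(X₅Y₄+X₆(Y₄+Y₅))), and define k₁ = ((X₂Y₂+X₁(Y₁+Y₂))(X₃Y₃+X₂(Y₂+Y₃)))/(X₂Y₂(X₃Y₃+X₂(Y₂+Y₃)+X₁(Y₁+Y₂+Y₃))), k₃ = ((X₃Y₃+X₂(Y₂+Y₃))(X₄Y₄+X₃(Y₃+Y₄)))/(X₃Y₃(X₄Y₄+X₃(Y₃+Y₄)+X₂(Y₂+Y₃+Y₄))), k₄ = ((X₃Y₂+X₄(Y₂+Y₃))(X₄Y₃+X₅(Y₃+Y₄)))/(X₄Y₃(X₃Y₂+(X₄+X₅)(Y₂+Y₃)+X₅Y₄)), k₆ = ((X₄Y₃+X₅(Y₃+Y₄))(X₅Y₄+X₆(Y₄+Y₅)))/(X₅Y₄(X₄Y₃+(X₅+X₆)(Y₃+Y₄)+X₆Y₅)). Then f₆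 = 2(k₁−1)(k₃−1)(k₄−1)(k₆−1)/(k₁k₃k₄k₆) as rational functions. -/
import Mathlib

noncomputable def k1 (X1 X2 X3 Y1 Y2 Y3 : ℝ) : ℝ :=
  ((X2 * Y2 + X1 * (Y1 + Y2)) * (X3 * Y3 + X2 * (Y2 + Y3))) /
    (X2 * Y2 * (X3 * Y3 + X2 * (Y2 + Y3) + X1 * (Y1 + Y2 + Y3)))

noncomputable def k3 (X2 X3 X4 Y2 Y3 Y4 : ℝ) : ℝ :=
  ((X3 * Y3 + X2 * (Y2 + Y3)) * (X4 * Y4 + X3 * (Y3 + Y4))) /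
    (X3 * Y3 * (X4 * Y4 + X3 * (Y3 + Y4) + X2 * (Y2 + Y3 + Y4)))

noncomputable def k4 (X3 X4 X5 Y2 Y3 Y4 : ℝ) : ℝ :=
  ((X3 * Y2 + X4 * (Y2 + Y3)) * (X4 * Y3 + X5 * (Y3 + Y4))) /
    (X4 * Y3 * (X3 * Y2 + (X4 + X5) * (Y2 + Y3) + X5 * Y4))

noncomputable def k6 (X4 X5 X6 Y3 Y4 Y5 : ℝ) : ℝ :=
  ((X4 * Y3 + X5 * (Y3 + Y4)) * (X5 * Y4 + X6 * (Y4 + Y5))) /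
    (X5 * Y4 * (X4 * Y3 + (X5 + X6) * (Y3 + Y4) + X6 * Y5))

private lemma aux_combine (n1 d1 n3 d3 n4 d4 n6 d6 m1 m3 m4 m6 : ℝ)
    (h1 : d1 ≠ 0) (h3 : d3 ≠ 0) (h4 : d4 ≠ 0) (h6 : d6 ≠ 0)
    (g1 : m1 ≠ 0) (g3 : m3 ≠ 0) (g4 : m4 ≠ 0) (g6 : m6 ≠ 0) :
    2 * (n1 / d1) * (n3 / d3) * (n4 / d4) * (n6 / d6) /
      (m1 / d1 * (m3 / d3) * (m4 / d4) * (m6 / d6))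
    = 2 * n1 * n3 * n4 * n6 / (m1 * m3 * m4 * m6) := by
  field_simp

/-- `f₆ = 2(k₁−1)(k₃−1)(k₄−1)(k₆−1)/(k₁k₃k₄k₆)` as rational functions. -/
theorem stmt_17 (X1 X2 X3 X4 X5 X6 Y1 Y2 Y3 Y4 Y5 : ℝ)
    (hA1 : X2 * Y2 + X1 * (Y1 + Y2) ≠ 0)
    (hA2 : X3 * Y3 + X2 * (Y2 + Y3) ≠ 0)
    (hA3 : X4 * Y4 + X3 * (Y3 + Y4) ≠ 0)
    (hA4 : X3 * Y2 + X4 * (Y2 + Y3) ≠ 0)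
    (hA5 : X4 * Y3 + X5 * (Y3 + Y4) ≠ 0)
    (hA6 : X5 * Y4 + X6 * (Y4 + Y5) ≠ 0)
    (hD1 : X2 * Y2 * (X3 * Y3 + X2 * (Y2 + Y3) + X1 * (Y1 + Y2 + Y3)) ≠ 0)
    (hD3 : X3 * Y3 * (X4 * Y4 + X3 * (Y3 + Y4) + X2 * (Y2 + Y3 + Y4)) ≠ 0)
    (hD4 : X4 * Y3 * (X3 * Y2 + (X4 + X5) * (Y2 + Y3) + X5 * Y4) ≠ 0)
    (hD6 : X5 * Y4 * (X4 * Y3 + (X5 + X6) * (Y3 + Y4) + X6 * Y5) ≠ 0) :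
    2 * X1 * X2 * X5 * X6 * Y2 * (X2 * Y1 + X3 * (Y1 + Y2)) * Y3 ^ 2 * Y4
        * (X5 * Y5 + X4 * (Y4 + Y5)) /
      ((X2 * Y2 + X1 * (Y1 + Y2)) * (X3 * Y3 + X2 * (Y2 + Y3)) ^ 2
        * (X4 * Y3 + X5 * (Y3 + Y4)) ^ 2 * (X5 * Y4 + X6 * (Y4 + Y5)))
    = 2 * (k1 X1 X2 X3 Y1 Y2 Y3 - 1) * (k3 X2 X3 X4 Y2 Y3 Y4 - 1)
        * (k4 X3 X4 X5 Y2 Y3 Y4 - 1) * (k6 X4 X5 X6 Y3 Y4 Y5 - 1) /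
      (k1 X1 X2 X3 Y1 Y2 Y3 * k3 X2 X3 X4 Y2 Y3 Y4
        * k4 X3 X4 X5 Y2 Y3 Y4 * k6 X4 X5 X6 Y3 Y4 Y5) := by
  rw [k1, k3, k4, k6]
  rw [div_sub_one hD1, div_sub_one hD3, div_sub_one hD4, div_sub_one hD6]
  rw [show (X2 * Y2 + X1 * (Y1 + Y2)) * (X3 * Y3 + X2 * (Y2 + Y3)) -
        X2 * Y2 * (X3 * Y3 + X2 * (Y2 + Y3) + X1 * (Y1 + Y2 + Y3))
      = X1 * Y3 * (X2 * Y1 + X3 * (Y1 + Y2)) from by ring,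
    show (X3 * Y3 + X2 * (Y2 + Y3)) * (X4 * Y4 + X3 * (Y3 + Y4)) -
        X3 * Y3 * (X4 * Y4 + X3 * (Y3 + Y4) + X2 * (Y2 + Y3 + Y4))
      = X2 * Y4 * (X3 * Y2 + X4 * (Y2 + Y3)) from by ring,
    show (X3 * Y2 + X4 * (Y2 + Y3)) * (X4 * Y3 + X5 * (Y3 + Y4)) -
        X4 * Y3 * (X3 * Y2 + (X4 + X5) * (Y2 + Y3) + X5 * Y4)
      = X5 * Y2 * (X4 * Y4 + X3 * (Y3 + Y4)) from by ring,
    show (X4 * Y3 + X5 * (Y3 + Y4)) * (X5 * Y4 + X6 * (Y4 + Y5)) -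
        X5 * Y4 * (X4 * Y3 + (X5 + X6) * (Y3 + Y4) + X6 * Y5)
      = X6 * Y3 * (X5 * Y5 + X4 * (Y4 + Y5)) from by ring]
  rw [aux_combine _ _ _ _ _ _ _ _ _ _ _ _ hD1 hD3 hD4 hD6
    (mul_ne_zero hA1 hA2) (mul_ne_zero hA2 hA3) (mul_ne_zero hA4 hA5)
    (mul_ne_zero hA5 hA6)]
  rw [show 2 * (X1 * Y3 * (X2 * Y1 + X3 * (Y1 + Y2))) * (X2 * Y4 * (X3 * Y2 + X4 * (Y2 + Y3)))
        * (X5 * Y2 * (X4 * Y4 + X3 * (Y3 + Y4))) * (X6 * Y3 * (X5 * Y5 + X4 * (Y4 + Y5)))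
      = 2 * X1 * X2 * X5 * X6 * Y2 * (X2 * Y1 + X3 * (Y1 + Y2)) * Y3 ^ 2 * Y4
          * (X5 * Y5 + X4 * (Y4 + Y5))
        * ((X4 * Y4 + X3 * (Y3 + Y4)) * (X3 * Y2 + X4 * (Y2 + Y3))) from by ring,
    show (X2 * Y2 + X1 * (Y1 + Y2)) * (X3 * Y3 + X2 * (Y2 + Y3))
        * ((X3 * Y3 + X2 * (Y2 + Y3)) * (X4 * Y4 + X3 * (Y3 + Y4)))
        * ((X3 * Y2 + X4 * (Y2 + Y3)) * (X4 * Y3 + X5 * (Y3 + Y4)))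
        * ((X4 * Y3 + X5 * (Y3 + Y4)) * (X5 * Y4 + X6 * (Y4 + Y5)))
      = (X2 * Y2 + X1 * (Y1 + Y2)) * (X3 * Y3 + X2 * (Y2 + Y3)) ^ 2
          * (X4 * Y3 + X5 * (Y3 + Y4)) ^ 2 * (X5 * Y4 + X6 * (Y4 + Y5))
        * ((X4 * Y4 + X3 * (Y3 + Y4)) * (X3 * Y2 + X4 * (Y2 + Y3))) from by ring,
    mul_div_mul_right _ _ (mul_ne_zero hA3 hA4)]
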